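/- Let G be a graph, X ⊆ V(G), and k ≥ 1 with |δ(X)| ≥ (3/2)k. If there does not exist a partition U_1, …, U_m of V(G) \ X with |δ(U_i)| < k for all i, then G contains an X-spider of order k. -/

import Mathlib

/-- A finite multigraph without loops: a vertex type, an edge type, and an
endpoint map assigning to each edge an unordered pair of distinct vertices. -/
structure Multigraph where
  V : Type
  E : Type
  [finV : Finite V]
  [finE : Finite E]
  ends : E → Sym2 V
  no_loops : ∀ e, ¬ (ends e).IsDiag

attribute [instance] Multigraph.finV Multigraph.finE

namespace Multigraph

variable (G : Multigraph)

/-- The set of edges with exactly one endpoint in `X`. -/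
def edgeBoundary (X : Set G.V) : Set G.E :=
  {e | ∃ u v, G.ends e = s(u, v) ∧ u ∈ X ∧ v ∉ X}

/-- The degree of a vertex: the number of edges incident with it. -/
noncomputable def degree (v : G.V) : ℕ := {e | v ∈ G.ends e}.ncard

/-- Two vertices are adjacent if some edge joins them. -/
def Adj (u v : G.V) : Prop := ∃ e, G.ends e = s(u, v)

/-- Walks in a multigraph. -/
inductive Walk : G.V → G.V → Type
  | nil (v : G.V) : Walk v v
  | cons {u v w : G.V} (e : G.E) (h : G.ends e = s(u, v)) (p : Walk v w) : Walk u w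

variable {G}

/-- The list of edges of a walk. -/
def Walk.edges : ∀ {u v : G.V}, G.Walk u v → List G.E
  | _, _, .nil _ => []
  | _, _, .cons e _ p => e :: p.edges

/-- The list of vertices of a walk, from the first to the last. -/
def Walk.support : ∀ {u v : G.V}, G.Walk u v → List G.V
  | _, v, .nil _ => [v]
  | u, _, .cons _ _ p => u :: p.support

/-- A walk is a path if it repeats no vertex. -/
def Walk.IsPath {u v : G.V} (p : G.Walk u v) : Prop := p.support.Nodup

/-- The internal vertices of a walk (all vertices except the two endpoints). -/
def Walk.internals {u v : G.V} (p : G.Walk u v) : List G.V := p.support.tail.dropLast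

/-- The walk avoids the edge set `F`. -/
def Walk.avoids {u v : G.V} (p : G.Walk u v) (F : Set G.E) : Prop := ∀ e ∈ p.edges, e ∉ F

variable (G)

/-- Any two vertices can be joined by a walk avoiding the edge set `F`. -/
def ConnectedAvoiding (F : Set G.E) : Prop :=
  ∀ u v : G.V, ∃ p : G.Walk u v, p.avoids F

/-- A multigraph is connected if any two vertices are joined by a walk. -/
def Connected : Prop := G.ConnectedAvoiding ∅

/-- A multigraph is `k`-edge-connected if it has at least two vertices and
deleting any fewer than `k` edges leaves it connected. -/
def EdgeConnected (k : ℕ) : Prop :=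
  Nontrivial G.V ∧ ∀ F : Set G.E, F.ncard < k → G.ConnectedAvoiding F

end Multigraph

open Multigraph

/-- The data of a (weak) immersion of `H` in `G`: an injection of the vertices and
pairwise edge-disjoint composite paths, one for each edge of `H`. -/
structure ImmersionData (H G : Multigraph) where
  π : H.V → G.V
  inj : Function.Injective π
  pathEnds : H.E → G.V × G.V
  path : ∀ f : H.E, G.Walk (pathEnds f).1 (pathEnds f).2
  ends_eq : ∀ f : H.E, Sym2.map π (H.ends f) = s((pathEnds f).1, (pathEnds f).2)
  isPath : ∀ f, (path f).IsPath
  edge_disj : ∀ f f', f ≠ f' → ∀ e, e ∈ (path f).edges → e ∉ (path f').edges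

/-- `G` contains `H` as a (weak) immersion. -/
def Immersion (H G : Multigraph) : Prop := Nonempty (ImmersionData H G)

/-- An immersion is strong if no branch vertex is an internal vertex of a composite path. -/
def ImmersionData.Strong {H G : Multigraph} (I : ImmersionData H G) : Prop :=
  ∀ f : H.E, ∀ v : H.V, I.π v ∉ (I.path f).internals

/-- `G` contains `H` as a strong immersion. -/
def StrongImmersion (H G : Multigraph) : Prop := ∃ I : ImmersionData H G, I.Strong

/-- `G` contains `H` as a topological minor: an immersion whose composite paths are
internally vertex-disjoint and avoid the branch vertices internally. -/
def TopologicalMinor (H G : Multigraph) : Prop :=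
  ∃ I : ImmersionData H G,
    (∀ f v, I.π v ∉ (I.path f).internals) ∧
    (∀ f f', f ≠ f' → ∀ w, w ∈ (I.path f).internals → w ∉ (I.path f').internals)

/-- The complete multigraph `K t`: one edge for every unordered pair of distinct vertices. -/
def cliqueGraph (t : ℕ) : Multigraph where
  V := Fin t
  E := {p : Sym2 (Fin t) // ¬ p.IsDiag}
  ends := Subtype.val
  no_loops := fun e => e.2

/-- The multigraph `S_{k,n}`: vertices `x_1, …, x_n` (`some i`) and `y` (`none`), with
exactly `k` parallel edges between each `x_i` and `y`. -/
def starMulti (k n : ℕ) : Multigraph where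
  V := Option (Fin n)
  E := Fin n × Fin k
  ends := fun p => s(some p.1, none)
  no_loops := fun e h => by simp [Sym2.mk_isDiag_iff] at h

/-- The multigraph `P_{k,n}`: a path on `n` vertices with each edge replaced by `k`
parallel edges. -/
def pathMulti (k n : ℕ) : Multigraph where
  V := Fin n
  E := Fin (n - 1) × Fin k
  ends := fun p => s(⟨p.1.1, by have := p.1.2; omega⟩, ⟨p.1.1 + 1, by have := p.1.2; omega⟩)
  no_loops := fun e h => by simp [Sym2.mk_isDiag_iff, Fin.ext_iff] at h

namespace Multigraph

/-- A subgraph of a multigraph, given by a set of vertices and a set of edges with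
both endpoints among those vertices. -/
structure Sub (G : Multigraph) where
  verts : Set G.V
  edgeSet : Set G.E
  closed : ∀ e ∈ edgeSet, ∀ v ∈ G.ends e, v ∈ verts

/-- `(A, B)` is a separation: `A` and `B` are edge-disjoint subgraphs whose union is `G`. -/
def IsSeparation {G : Multigraph} (A B : G.Sub) : Prop :=
  A.verts ∪ B.verts = Set.univ ∧ A.edgeSet ∪ B.edgeSet = Set.univ ∧ A.edgeSet ∩ B.edgeSet = ∅

/-- The order of a separation `(A, B)`. -/
noncomputable def sepOrder {G : Multigraph} (A B : G.Sub) : ℕ := (A.verts ∩ B.verts).ncard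

/-- `𝒯` is a tangle of order `Θ` in `G`. -/
def IsTangle (G : Multigraph) (𝒯 : Set (G.Sub × G.Sub)) (Θ : ℕ) : Prop :=
  (∀ p ∈ 𝒯, IsSeparation p.1 p.2 ∧ sepOrder p.1 p.2 < Θ) ∧
  (∀ A B : G.Sub, IsSeparation A B → sepOrder A B < Θ → (A, B) ∈ 𝒯 ∨ (B, A) ∈ 𝒯) ∧
  (∀ p₁ ∈ 𝒯, ∀ p₂ ∈ 𝒯, ∀ p₃ ∈ 𝒯,
    ¬ (p₁.1.verts ∪ p₂.1.verts ∪ p₃.1.verts = Set.univ ∧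
       p₁.1.edgeSet ∪ p₂.1.edgeSet ∪ p₃.1.edgeSet = Set.univ)) ∧
  (∀ p ∈ 𝒯, p.1.verts ≠ Set.univ)

/-- The line graph of a multigraph: vertices are the edges of `G`, with an edge of the
line graph for each unordered pair of distinct edges of `G` sharing an endpoint. -/
def lineGraph (G : Multigraph) : Multigraph where
  V := G.E
  E := {p : Sym2 G.E // ¬ p.IsDiag ∧ ∃ e f, p = s(e, f) ∧ ∃ v, v ∈ G.ends e ∧ v ∈ G.ends f}
  ends := Subtype.val
  no_loops := fun e => e.2.1

/-- `G'` (with projection `q` and new vertex `x`) is obtained from `G` by consolidating the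
vertex set `X`: delete all edges with both ends in `X` and identify `X` to the vertex `x`. -/
def IsConsolidation (G : Multigraph) (X : Set G.V) (G' : Multigraph)
    (q : G.V → G'.V) (x : G'.V) : Prop :=
  Function.Surjective q ∧ (∀ a ∈ X, q a = x) ∧ (∀ a ∉ X, q a ≠ x) ∧
  (∀ a b, a ∉ X → b ∉ X → q a = q b → a = b) ∧
  ∃ φ : {e : G.E // ∃ w ∈ G.ends e, w ∉ X} ≃ G'.E,
    ∀ e, G'.ends (φ e) = Sym2.map q (G.ends e.1)

/-- An `X`-spider of order `k` with body `v`: `k` pairwise edge-disjoint paths from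
`v ∉ X` to `X`, none of them having an internal vertex in `X`. -/
def HasSpiderWithBody (G : Multigraph) (X : Set G.V) (k : ℕ) (v : G.V) : Prop :=
  v ∉ X ∧ ∃ (tgt : Fin k → G.V) (P : ∀ i, G.Walk v (tgt i)),
    (∀ i, tgt i ∈ X) ∧ (∀ i, (P i).IsPath) ∧
    (∀ i, ∀ w ∈ (P i).internals, w ∉ X) ∧
    (∀ i j, i ≠ j → ∀ e ∈ (P i).edges, e ∉ (P j).edges)

/-- `G` contains an `X`-spider of order `k`. -/
def HasXSpider (G : Multigraph) (X : Set G.V) (k : ℕ) : Prop :=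
  ∃ v, HasSpiderWithBody G X k v

/-- A model of the complete graph `K t` in `G`: `t` pairwise disjoint nonempty connected
branch sets with an edge of `G` between any two of them. -/
def IsCliqueModel (G : Multigraph) (t : ℕ) (X : Fin t → Set G.V) : Prop :=
  (∀ i, (X i).Nonempty) ∧
  (∀ i j, i ≠ j → Disjoint (X i) (X j)) ∧
  (∀ i, ∀ u ∈ X i, ∀ v ∈ X i, ∃ p : G.Walk u v, ∀ w ∈ p.support, w ∈ X i) ∧
  (∀ i j, i ≠ j → ∃ e, ∃ a ∈ X i, ∃ b ∈ X j, G.ends e = s(a, b))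

/-- The canonical separation `(A, B)` of the line graph of `G` associated to a vertex
set `U ⊆ V(G)`. -/
def IsCanonicalSeparation (G : Multigraph) (U : Set G.V) (A B : G.lineGraph.Sub) : Prop :=
  A.verts = {e : G.E | ∃ w ∈ G.ends e, w ∈ U} ∧
  A.edgeSet = {p : G.lineGraph.E | ∀ q ∈ G.lineGraph.ends p, ∃ w ∈ G.ends q, w ∈ U} ∧
  B.verts = {e : G.E | ∃ w ∈ G.ends e, w ∉ U} ∧
  B.edgeSet = {p : G.lineGraph.E | (∀ q ∈ G.lineGraph.ends p, ∃ w ∈ G.ends q, w ∉ U) ∧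
    ¬ (∀ q ∈ G.lineGraph.ends p, q ∈ G.edgeBoundary U)}

/-- A `k`-star with center `u`: a set of `k` edges all incident with `u`. -/
def IsKStarWithCenter (G : Multigraph) (F : Set G.E) (k : ℕ) (u : G.V) : Prop :=
  F.ncard = k ∧ ∀ e ∈ F, u ∈ G.ends e

/-- A set `F` of vertices of the line graph of `G` is free with respect to a tangle `𝒯`
in the line graph if no separation in `𝒯` of order less than `|F|` has `F` on its small side. -/
def FreeInTangle (G : Multigraph) (𝒯 : Set (G.lineGraph.Sub × G.lineGraph.Sub))
    (F : Set G.E) : Prop :=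
  ¬ ∃ p ∈ 𝒯, sepOrder p.1 p.2 < F.ncard ∧ F ⊆ p.1.verts

end Multigraph

/-!
If there is no `X`-spider of order `k`, then by the edge version of Menger's theorem every
vertex `v ∉ X` lies in a set `S ⊆ V(G) \ X` with `|δ(S)| < k`: a maximum flow from `v` into `X`,
built by augmenting paths, has value `< k`, and the vertices reachable from `v` in the residual
graph form such a set. The sets `S` cover `V(G) \ X`, and since `S ↦ |δ(S)|` is posimodular,
`|δ(A \ B)| + |δ(B \ A)| ≤ |δ(A)| + |δ(B)|`, one of two overlapping members can always give up
the overlap; a cover of minimal total size is therefore a partition.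
-/

namespace Multigraph

variable {G : Multigraph}

lemma mem_edgeBoundary_iff {e : G.E} {u w : G.V} (h : G.ends e = s(u, w)) (S : Set G.V) :
    e ∈ G.edgeBoundary S ↔ (u ∈ S ∧ w ∉ S) ∨ (w ∈ S ∧ u ∉ S) := by
  constructor
  · rintro ⟨a, b, hab, ha, hb⟩
    rw [h, Sym2.eq_iff] at hab
    rcases hab with ⟨rfl, rfl⟩ | ⟨rfl, rfl⟩ <;> tauto
  · rintro (⟨hu, hw⟩ | ⟨hw, hu⟩)
    · exact ⟨u, w, h, hu, hw⟩
    · exact ⟨w, u, h.trans Sym2.eq_swap, hw, hu⟩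

lemma ncard_edgeBoundary_sdiff_add_sdiff_le (A B : Set G.V) :
    (G.edgeBoundary (A \ B)).ncard + (G.edgeBoundary (B \ A)).ncard ≤
      (G.edgeBoundary A).ncard + (G.edgeBoundary B).ncard := by
  classical
  have := Fintype.ofFinite G.E
  simp only [Set.ncard_eq_toFinset_card', ← Set.filter_mem_univ_eq_toFinset, Finset.card_filter,
    ← Finset.sum_add_distrib]
  refine Finset.sum_le_sum fun e _ => ?_
  induction h : G.ends e using Sym2.ind with
  | _ u w =>
    simp only [mem_edgeBoundary_iff h, Set.mem_sdiff]
    by_cases u ∈ A <;> by_cases u ∈ B <;> by_cases w ∈ A <;> by_cases w ∈ B <;> simp [*]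

namespace Walk

lemma start_mem_support : ∀ {u w : G.V} (p : G.Walk u w), u ∈ p.support
  | _, _, .nil _ => List.mem_singleton_self _
  | _, _, .cons _ _ _ => List.mem_cons_self

lemma support_ne_nil {u w : G.V} (p : G.Walk u w) : p.support ≠ [] :=
  List.ne_nil_of_mem p.start_mem_support

lemma mem_support_of_mem_edges : ∀ {u w : G.V} (p : G.Walk u w) {e : G.E} {x : G.V},
    e ∈ p.edges → x ∈ G.ends e → x ∈ p.support
  | _, _, .nil _, _, _, he, _ => by simp [edges] at he
  | _, _, .cons e' h p, e, x, he, hx => by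
    rcases List.mem_cons.1 he with rfl | he
    · rw [h, Sym2.mem_iff] at hx
      rcases hx with rfl | rfl
      · exact List.mem_cons_self
      · exact List.mem_cons_of_mem _ p.start_mem_support
    · exact List.mem_cons_of_mem _ (p.mem_support_of_mem_edges he hx)

lemma IsPath.edges_nodup : ∀ {u w : G.V} {p : G.Walk u w}, p.IsPath → p.edges.Nodup
  | _, _, .nil _, _ => List.nodup_nil
  | u, _, .cons e h p, hp => by
    rw [IsPath, support, List.nodup_cons] at hp
    refine List.nodup_cons.2 ⟨fun he => hp.1 ?_, IsPath.edges_nodup hp.2⟩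
    exact p.mem_support_of_mem_edges he (h ▸ Sym2.mem_mk_left u _)

def AllSteps (P : G.V → G.E → G.V → Prop) : ∀ {u w : G.V}, G.Walk u w → Prop
  | _, _, .nil _ => True
  | _, _, .cons (u := u) (v := w) e _ p => P u e w ∧ p.AllSteps P

@[simp] lemma allSteps_cons {P : G.V → G.E → G.V → Prop} {u w x : G.V} {e : G.E}
    {h : G.ends e = s(u, w)} {p : G.Walk w x} :
    (cons e h p).AllSteps P ↔ P u e w ∧ p.AllSteps P := Iff.rfl

lemma AllSteps.mono {P Q : G.V → G.E → G.V → Prop} :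
    ∀ {u w : G.V} {p : G.Walk u w}, (∀ a e b, e ∈ p.edges → P a e b → Q a e b) →
      p.AllSteps P → p.AllSteps Q
  | _, _, .nil _, _, _ => trivial
  | _, _, .cons _ _ _, hPQ, hp =>
    allSteps_cons.2 ⟨hPQ _ _ _ List.mem_cons_self (allSteps_cons.1 hp).1,
      AllSteps.mono (fun a e b he => hPQ a e b (List.mem_cons_of_mem _ he)) (allSteps_cons.1 hp).2⟩

lemma AllSteps.forall_mem_edges {P : G.V → G.E → G.V → Prop} {Q : G.E → Prop}
    (hPQ : ∀ a e b, P a e b → Q e) :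
    ∀ {u w : G.V} {p : G.Walk u w}, p.AllSteps P → ∀ e ∈ p.edges, Q e
  | _, _, .nil _, _, e, he => by simp [edges] at he
  | _, _, .cons _ _ _, hp, e, he => by
    obtain ⟨hstep, hp⟩ := allSteps_cons.1 hp
    rcases List.mem_cons.1 he with rfl | he
    · exact hPQ _ _ _ hstep
    · exact AllSteps.forall_mem_edges hPQ hp e he

lemma forall_mem_support_dropLast {P : G.V → G.E → G.V → Prop} {Q : G.V → Prop}
    (hPQ : ∀ a e b, P a e b → Q a) :
    ∀ {u w : G.V} {p : G.Walk u w}, p.AllSteps P → ∀ x ∈ p.support.dropLast, Q x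
  | _, _, .nil _, _, x, hx => by simp [support] at hx
  | _, _, .cons e _ p, hp, x, hx => by
    obtain ⟨hstep, hp⟩ := allSteps_cons.1 hp
    rw [support, List.dropLast_cons_of_ne_nil p.support_ne_nil] at hx
    rcases List.mem_cons.1 hx with rfl | hx
    · exact hPQ _ _ _ hstep
    · exact forall_mem_support_dropLast hPQ hp x hx

lemma forall_mem_internals {P : G.V → G.E → G.V → Prop} {Q : G.V → Prop}
    (hPQ : ∀ a e b, P a e b → Q a) {u w : G.V} {p : G.Walk u w} (hp : p.AllSteps P) :
    ∀ x ∈ p.internals, Q x := fun x hx =>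
  forall_mem_support_dropLast hPQ hp x
    (List.tail_subset _ (by rwa [List.tail_dropLast]))

lemma exists_isPath_of_mem_support {P : G.V → G.E → G.V → Prop} {a : G.V} :
    ∀ {u w : G.V} (p : G.Walk u w), p.IsPath → p.AllSteps P → a ∈ p.support →
      ∃ q : G.Walk a w, q.IsPath ∧ q.AllSteps P
  | _, _, .nil _, hp, hP, ha => by
    rw [support, List.mem_singleton] at ha
    subst ha
    exact ⟨_, hp, hP⟩
  | u, _, .cons e h p, hp, hP, ha => by
    by_cases hau : a = u
    · subst hau
      exact ⟨_, hp, hP⟩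
    · exact exists_isPath_of_mem_support p (List.nodup_cons.1 hp).2 (allSteps_cons.1 hP).2
        ((List.mem_cons.1 ha).resolve_left hau)

lemma exists_isPath_of_reflTransGen {P : G.V → G.E → G.V → Prop} {u w : G.V}
    (h : Relation.ReflTransGen (fun a b => ∃ e, G.ends e = s(a, b) ∧ P a e b) u w) :
    ∃ p : G.Walk u w, p.IsPath ∧ p.AllSteps P := by
  induction h using Relation.ReflTransGen.head_induction_on with
  | refl => exact ⟨.nil w, List.nodup_singleton w, trivial⟩
  | @head a c hstep _ ih =>
    obtain ⟨e, he, hPe⟩ := hstep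
    obtain ⟨q, hq, hqP⟩ := ih
    by_cases ha : a ∈ q.support
    · exact exists_isPath_of_mem_support q hq hqP ha
    · exact ⟨.cons e he q, List.nodup_cons.2 ⟨ha, hq⟩, allSteps_cons.2 ⟨hPe, hqP⟩⟩

end Walk

open Classical in
noncomputable def crossing {β : Type*} (S : Set β) (p : β × β) : ℤ :=
  (if p.1 ∈ S then 1 else 0) - (if p.2 ∈ S then 1 else 0)

lemma crossing_add_crossing {β : Type*} (S : Set β) (a b c : β) :
    crossing S (a, b) + crossing S (b, c) = crossing S (a, c) := by
  simp only [crossing]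
  ring

noncomputable def netOut (D : Finset G.E) (σ : G.E → G.V × G.V) (S : Set G.V) : ℤ :=
  ∑ e ∈ D, crossing S (σ e)

def Residual (D : Finset G.E) (σ : G.E → G.V × G.V) (a : G.V) (e : G.E) (b : G.V) : Prop :=
  e ∉ D ∨ σ e = (b, a)

section netOut

open Classical

variable {D : Finset G.E} {σ : G.E → G.V × G.V}

lemma netOut_insert {e : G.E} (he : e ∉ D) (a b : G.V) (S : Set G.V) :
    netOut (insert e D) (Function.update σ e (a, b)) S = netOut D σ S + crossing S (a, b) := by
  rw [netOut, Finset.sum_insert he, Function.update_self, add_comm, netOut]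
  congr 1
  refine Finset.sum_congr rfl fun f hf => ?_
  rw [Function.update_of_ne (ne_of_mem_of_not_mem hf he)]

lemma netOut_erase {e : G.E} (he : e ∈ D) (S : Set G.V) :
    netOut (D.erase e) σ S = netOut D σ S - crossing S (σ e) :=
  Finset.sum_erase_eq_sub he

lemma exists_netOut_eq_of_residual_step (hσ : ∀ e, G.ends e = s((σ e).1, (σ e).2))
    {a b : G.V} {e : G.E} (he : G.ends e = s(a, b)) (hres : Residual D σ a e b) :
    ∃ (D' : Finset G.E) (σ' : G.E → G.V × G.V), (∀ e, G.ends e = s((σ' e).1, (σ' e).2)) ∧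
      (∀ S, netOut D' σ' S = netOut D σ S + crossing S (a, b)) ∧
      ∀ f ≠ e, (f ∈ D' ↔ f ∈ D) ∧ σ' f = σ f := by
  by_cases heD : e ∈ D
  · have hσe : σ e = (b, a) := hres.resolve_left (not_not.2 heD)
    refine ⟨D.erase e, σ, hσ, fun S => ?_, fun f hf => ⟨by simp [hf], rfl⟩⟩
    rw [netOut_erase heD, hσe, crossing, crossing]
    ring
  · refine ⟨insert e D, Function.update σ e (a, b), fun f => ?_, netOut_insert heD a b,
      fun f hf => ⟨by simp [hf], Function.update_of_ne hf _ _⟩⟩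
    by_cases hf : f = e
    · subst hf
      simpa using he
    · simpa [Function.update_of_ne hf] using hσ f

lemma exists_netOut_eq_of_residual :
    ∀ {a c : G.V} (p : G.Walk a c) (D : Finset G.E) (σ : G.E → G.V × G.V),
      (∀ e, G.ends e = s((σ e).1, (σ e).2)) → p.edges.Nodup → p.AllSteps (Residual D σ) →
      ∃ (D' : Finset G.E) (σ' : G.E → G.V × G.V), (∀ e, G.ends e = s((σ' e).1, (σ' e).2)) ∧
        ∀ S, netOut D' σ' S = netOut D σ S + crossing S (a, c)
  | _, _, .nil _, D, σ, hσ, _, _ => ⟨D, σ, hσ, fun S => by simp [crossing]⟩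
  | a, c, .cons (v := b) e he p, D, σ, hσ, hnd, hres => by
    obtain ⟨hep, hnd⟩ := List.nodup_cons.1 hnd
    obtain ⟨hres_e, hres⟩ := Walk.allSteps_cons.1 hres
    obtain ⟨D₁, σ₁, hσ₁, hD₁, hagree⟩ := exists_netOut_eq_of_residual_step hσ he hres_e
    have hres₁ : p.AllSteps (Residual D₁ σ₁) := hres.mono fun x f y hf h => by
      obtain ⟨hfD, hfσ⟩ := hagree f (ne_of_mem_of_not_mem hf hep)
      rwa [Residual, hfD, hfσ]
    obtain ⟨D', σ', hσ', hD'⟩ := exists_netOut_eq_of_residual p D₁ σ₁ hσ₁ hnd hres₁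
    exact ⟨D', σ', hσ', fun S => by rw [hD', hD₁, add_assoc, crossing_add_crossing]⟩

lemma netOut_sdiff_edges_of_forward {S : Set G.V} :
    ∀ {a c : G.V} (p : G.Walk a c), p.edges.Nodup →
      p.AllSteps (fun x e y => e ∈ D ∧ σ e = (x, y)) →
      netOut (D \ p.edges.toFinset) σ S = netOut D σ S - crossing S (a, c)
  | _, _, .nil _, _, _ => by simp [Walk.edges, crossing]
  | a, c, .cons (v := b) e _ p, hnd, hfwd => by
    obtain ⟨hep, hnd⟩ := List.nodup_cons.1 hnd
    obtain ⟨⟨heD, hσe⟩, hfwd⟩ := Walk.allSteps_cons.1 hfwd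
    rw [show (Walk.cons e _ p).edges = e :: p.edges from rfl, List.toFinset_cons,
      Finset.sdiff_insert, netOut_erase (Finset.mem_sdiff.2 ⟨heD, by simpa using hep⟩),
      netOut_sdiff_edges_of_forward p hnd hfwd, hσe, ← crossing_add_crossing S a b c]
    ring

end netOut

section Flows

variable {X : Set G.V} {v : G.V}

open Classical in
/-- A flow of value `j` from `v` into `X`: the edges of `D`, directed by an orientation `σ` of
`G`. Conservation is imposed on every vertex set avoiding `X` rather than on single vertices
(equivalent by summation), since the proof only ever evaluates it on cuts. -/
structure Flow (G : Multigraph) (X : Set G.V) (v : G.V) (j : ℕ) where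
  D : Finset G.E
  σ : G.E → G.V × G.V
  ends_eq : ∀ e, G.ends e = s((σ e).1, (σ e).2)
  netOut_eq : ∀ S ⊆ Xᶜ, netOut D σ S = if v ∈ S then (j : ℤ) else 0

namespace Flow

open Classical

noncomputable def zero : Flow G X v 0 where
  D := ∅
  σ e := (G.ends e).out
  ends_eq e := (Quot.out_eq (G.ends e)).symm
  netOut_eq S _ := by simp [netOut]

lemma exists_forward_path {j : ℕ} (F : Flow G X v (j + 1)) :
    ∃ c ∈ X, ∃ p : G.Walk v c, p.IsPath ∧
      p.AllSteps (fun a e b => a ∉ X ∧ e ∈ F.D ∧ F.σ e = (a, b)) := by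
  by_contra! h
  set R := {b | Relation.ReflTransGen
    (fun a b => ∃ e, G.ends e = s(a, b) ∧ a ∉ X ∧ e ∈ F.D ∧ F.σ e = (a, b)) v b}
  have hRX : R ⊆ Xᶜ := fun b hb hbX => by
    obtain ⟨p, hp, hP⟩ := Walk.exists_isPath_of_reflTransGen hb
    exact h b hbX p hp hP
  have hval := F.netOut_eq R hRX
  rw [if_pos (show v ∈ R from .refl)] at hval
  -- no edge of `D` leaves the set reachable from `v`, so no flow can leave it
  have hnonpos : netOut F.D F.σ R ≤ 0 := Finset.sum_nonpos fun e he => by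
    have hfwd : (F.σ e).1 ∈ R → (F.σ e).2 ∈ R := fun ht =>
      ht.tail ⟨e, F.ends_eq e, hRX ht, he, rfl⟩
    unfold crossing
    split_ifs <;> simp_all
  omega

lemma exists_augmenting_path {j : ℕ} (F : Flow G X v j)
    (hcut : ∀ S, v ∈ S → S ⊆ Xᶜ → j < (G.edgeBoundary S).ncard) :
    ∃ x ∈ X, ∃ p : G.Walk v x, p.IsPath ∧ p.AllSteps (Residual F.D F.σ) := by
  by_contra! h
  set R := {b | Relation.ReflTransGen
    (fun a b => ∃ e, G.ends e = s(a, b) ∧ Residual F.D F.σ a e b) v b}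
  have hRX : R ⊆ Xᶜ := fun b hb hbX => by
    obtain ⟨p, hp, hP⟩ := Walk.exists_isPath_of_reflTransGen hb
    exact h b hbX p hp hP
  have hval := F.netOut_eq R hRX
  rw [if_pos (show v ∈ R from .refl)] at hval
  have hδD : G.edgeBoundary R ⊆ F.D := fun e ⟨_, _, he, hu, hw⟩ => by
    by_contra heD
    exact hw (hu.tail ⟨e, he, Or.inl heD⟩)
  -- every edge leaving `R` is saturated and no edge entering `R` carries flow
  have hcross : ∀ e ∈ F.D, crossing R (F.σ e) = if e ∈ G.edgeBoundary R then 1 else 0 := by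
    intro e _
    have hback : (F.σ e).2 ∈ R → (F.σ e).1 ∈ R := fun hh =>
      hh.tail ⟨e, (F.ends_eq e).trans Sym2.eq_swap, Or.inr rfl⟩
    rw [crossing, mem_edgeBoundary_iff (F.ends_eq e)]
    by_cases ht : (F.σ e).1 ∈ R <;> by_cases hh : (F.σ e).2 ∈ R <;> simp_all
  have hnet : netOut F.D F.σ R = (G.edgeBoundary R).ncard := by
    rw [netOut, Finset.sum_congr rfl hcross, Finset.sum_boole, ← Set.ncard_coe_finset,
      Finset.coe_filter]
    congr 2
    ext e
    exact ⟨fun he => he.2, fun he => ⟨hδD he, he⟩⟩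
  have := hcut R Relation.ReflTransGen.refl hRX
  omega

lemma nonempty_succ {j : ℕ} (F : Flow G X v j) {x : G.V} (hx : x ∈ X) (p : G.Walk v x)
    (hp : p.IsPath) (hres : p.AllSteps (Residual F.D F.σ)) : Nonempty (Flow G X v (j + 1)) := by
  obtain ⟨D', σ', hσ', hD'⟩ :=
    exists_netOut_eq_of_residual p F.D F.σ F.ends_eq hp.edges_nodup hres
  refine ⟨⟨D', σ', hσ', fun S hS => ?_⟩⟩
  rw [hD', F.netOut_eq S hS, crossing, if_neg fun h => hS h hx]
  split_ifs <;> omega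

noncomputable def removePath {j : ℕ} (F : Flow G X v (j + 1)) {c : G.V} (hc : c ∈ X)
    (p : G.Walk v c) (hp : p.IsPath) (hfwd : p.AllSteps (fun a e b => e ∈ F.D ∧ F.σ e = (a, b))) :
    Flow G X v j where
  D := F.D \ p.edges.toFinset
  σ := F.σ
  ends_eq := F.ends_eq
  netOut_eq S hS := by
    rw [netOut_sdiff_edges_of_forward p hp.edges_nodup hfwd, F.netOut_eq S hS, crossing,
      if_neg fun h => hS h hc]
    split_ifs <;> omega

lemma exists_paths : ∀ {j : ℕ} (F : Flow G X v j),
    ∃ (tgt : Fin j → G.V) (P : ∀ i, G.Walk v (tgt i)),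
      (∀ i, tgt i ∈ X) ∧ (∀ i, (P i).IsPath) ∧ (∀ i, ∀ w ∈ (P i).internals, w ∉ X) ∧
      (∀ i, ∀ e ∈ (P i).edges, e ∈ F.D) ∧
      (∀ i i', i ≠ i' → ∀ e ∈ (P i).edges, e ∉ (P i').edges)
  | 0, _ => ⟨Fin.elim0, fun i => i.elim0, by simp⟩
  | j + 1, F => by
    obtain ⟨c, hc, p, hp, hfwd⟩ := F.exists_forward_path
    obtain ⟨tgt, P, hX, hpath, hint, hD, hdisj⟩ :=
      (F.removePath hc p hp (hfwd.mono fun _ _ _ _ h => h.2)).exists_paths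
    have hpint : ∀ w ∈ p.internals, w ∉ X := Walk.forall_mem_internals (fun _ _ _ h => h.1) hfwd
    have hpD : ∀ e ∈ p.edges, e ∈ F.D := hfwd.forall_mem_edges fun _ _ _ h => h.2.1
    have hnp : ∀ i, ∀ e ∈ (P i).edges, e ∉ p.edges := fun i e he =>
      List.mem_toFinset.not.1 (Finset.mem_sdiff.1 (hD i e he)).2
    refine ⟨Fin.cons c tgt, Fin.cons p P, Fin.forall_fin_succ.2 ⟨hc, hX⟩,
      Fin.forall_fin_succ.2 ⟨hp, hpath⟩, Fin.forall_fin_succ.2 ⟨hpint, hint⟩,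
      Fin.forall_fin_succ.2 ⟨hpD, fun i e he => (Finset.mem_sdiff.1 (hD i e he)).1⟩, ?_⟩
    intro i i' hii'
    cases i using Fin.cases <;> cases i' using Fin.cases
    · exact absurd rfl hii'
    · exact fun e he he' => hnp _ e he' he
    · exact hnp _
    · exact hdisj _ _ (fun h => hii' (congrArg Fin.succ h))

end Flow

lemma exists_flow {k : ℕ} (hcut : ∀ S, v ∈ S → S ⊆ Xᶜ → k ≤ (G.edgeBoundary S).ncard) :
    ∀ j ≤ k, Nonempty (Flow G X v j)
  | 0, _ => ⟨Flow.zero⟩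
  | j + 1, hj => by
    obtain ⟨F⟩ := exists_flow hcut j (by omega)
    obtain ⟨x, hx, p, hp, hres⟩ :=
      F.exists_augmenting_path fun S hvS hSX => by have := hcut S hvS hSX; omega
    exact F.nonempty_succ hx p hp hres

theorem hasSpiderWithBody_of_le_ncard_edgeBoundary {k : ℕ} (hv : v ∉ X)
    (hcut : ∀ S, v ∈ S → S ⊆ Xᶜ → k ≤ (G.edgeBoundary S).ncard) :
    G.HasSpiderWithBody X k v := by
  obtain ⟨F⟩ := exists_flow hcut k le_rfl
  obtain ⟨tgt, P, hX, hpath, hint, -, hdisj⟩ := F.exists_paths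
  exact ⟨hv, tgt, P, hX, hpath, hint, hdisj⟩

end Flows

end Multigraph

section Uncrossing

variable {α ι : Type*} [DecidableEq ι]

lemma iUnion_update_sdiff (U : ι → Set α) {i j : ι} (hij : i ≠ j) :
    ⋃ l, Function.update U i (U i \ U j) l = ⋃ l, U l := by
  refine Set.Subset.antisymm (Set.iUnion_subset fun l => ?_) (Set.iUnion_subset fun l x hx => ?_)
  · rcases eq_or_ne l i with rfl | hl
    · simpa using Set.sdiff_subset.trans (Set.subset_iUnion U l)
    · simpa [hl] using Set.subset_iUnion U l
  · by_cases hxj : x ∈ U j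
    · exact Set.mem_iUnion.2 ⟨j, by simpa [hij.symm] using hxj⟩
    · rcases eq_or_ne l i with rfl | hl
      · exact Set.mem_iUnion.2 ⟨l, by simpa using ⟨hx, hxj⟩⟩
      · exact Set.mem_iUnion.2 ⟨l, by simpa [hl] using hx⟩

variable [Finite α]

lemma sum_ncard_update_sdiff_lt [Fintype ι] (U : ι → Set α) {i j : ι}
    (hij : ¬ Disjoint (U i) (U j)) :
    ∑ l, (Function.update U i (U i \ U j) l).ncard < ∑ l, (U l).ncard := by
  refine Finset.sum_lt_sum (fun l _ => ?_) ⟨i, Finset.mem_univ _, ?_⟩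
  · rcases eq_or_ne l i with rfl | hl
    · simpa using Set.ncard_le_ncard Set.sdiff_subset
    · simp [hl]
  · rw [Function.update_self]
    exact Set.ncard_lt_ncard
      (Set.sdiff_ssubset_left_iff.2 (Set.not_disjoint_iff_nonempty_inter.1 hij))

lemma exists_fin_cover {T : Set α} {p : Set α → Prop} (h : ∀ x ∈ T, ∃ S ⊆ T, x ∈ S ∧ p S) :
    ∃ (m : ℕ) (U : Fin m → Set α), ⋃ i, U i = T ∧ ∀ i, p (U i) := by
  choose! S hST hxS hpS using h
  let e := Finite.equivFin T
  refine ⟨Nat.card T, fun i => S (e.symm i), ?_, fun i => hpS _ (e.symm i).2⟩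
  refine Set.Subset.antisymm (Set.iUnion_subset fun i => hST _ (e.symm i).2) fun x hx => ?_
  exact Set.mem_iUnion.2 ⟨e ⟨x, hx⟩, by simpa only [Equiv.symm_apply_apply] using hxS x hx⟩

theorem exists_pairwise_disjoint_cover_of_posimodular {f : Set α → ℕ}
    (hf : ∀ A B, f (A \ B) + f (B \ A) ≤ f A + f B) {T : Set α} {k m : ℕ} {U : Fin m → Set α}
    (hU : ⋃ i, U i = T) (hUk : ∀ i, f (U i) < k) :
    ∃ (m : ℕ) (U : Fin m → Set α), (∀ i j, i ≠ j → Disjoint (U i) (U j)) ∧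
      ⋃ i, U i = T ∧ ∀ i, f (U i) < k := by
  induction hn : ∑ i, (U i).ncard using Nat.strong_induction_on generalizing U with
  | _ n ih =>
  by_cases hdisj : ∀ i j, i ≠ j → Disjoint (U i) (U j)
  · exact ⟨m, U, hdisj, hU, hUk⟩
  push Not at hdisj
  obtain ⟨i, j, hij, hij'⟩ := hdisj
  wlog hk : f (U i \ U j) < k generalizing i j
  · -- by posimodularity, if `U i` cannot give up the overlap then `U j` can
    refine this j i hij.symm (fun h => hij' h.symm) ?_
    have := hf (U i) (U j)
    have := hUk i
    have := hUk j
    omega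
  exact ih _ (hn ▸ sum_ncard_update_sdiff_lt U hij') (hU ▸ iUnion_update_sdiff U hij)
    (fun l => by rcases eq_or_ne l i with rfl | hl <;> simp [*]) rfl

end Uncrossing

theorem spider_of_no_partition_general (G : Multigraph) (X : Set G.V) (k : ℕ)
    (hnopart : ¬ ∃ (m : ℕ) (U : Fin m → Set G.V),
      (∀ i j, i ≠ j → Disjoint (U i) (U j)) ∧ (⋃ i, U i) = Set.univ \ X ∧
      ∀ i, (G.edgeBoundary (U i)).ncard < k) :
    G.HasXSpider X k := by
  by_contra hspider
  have hsmall : ∀ v ∈ Xᶜ, ∃ S ⊆ Xᶜ, v ∈ S ∧ (G.edgeBoundary S).ncard < k := by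
    intro v hv
    by_contra! h
    exact hspider ⟨v, hasSpiderWithBody_of_le_ncard_edgeBoundary hv fun S hvS hSX => h S hSX hvS⟩
  obtain ⟨m, U, hU, hUk⟩ := exists_fin_cover hsmall
  rw [← Set.compl_eq_univ_sdiff] at hnopart
  exact hnopart
    (exists_pairwise_disjoint_cover_of_posimodular (f := fun S => (G.edgeBoundary S).ncard)
      ncard_edgeBoundary_sdiff_add_sdiff_le hU hUk)

/-- if `|δ(X)| ≥ (3/2)k` and there is no partition of `V(G) \ X` into parts
with small edge boundary, then `G` contains an `X`-spider of order `k`. -/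
theorem spider_of_no_partition (G : Multigraph) (X : Set G.V) (k : ℕ) (hk : 1 ≤ k)
    (hδ : 3 * k ≤ 2 * (G.edgeBoundary X).ncard)
    (hnopart : ¬ ∃ (m : ℕ) (U : Fin m → Set G.V),
      (∀ i j, i ≠ j → Disjoint (U i) (U j)) ∧ (⋃ i, U i) = Set.univ \ X ∧
      ∀ i, (G.edgeBoundary (U i)).ncard < k) :
    G.HasXSpider X k :=
  spider_of_no_partition_general G X k hnopart
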